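/- arXiv:2605.26931 — 2 statements merged into one kernel-verified Lean document; each statement's English description precedes it below -/
import Mathlib

section
/- Let ξ ~ Uniform(a,1) with 0 < a < 1, and let the triggering probability be p(ρ) = P(ξ > σ e^{-cρ^2/γ}) = (1 - max{a, σ e^{-cρ^2/γ}})/(1-a), where σ ≥ 1, c > 0, γ > 0. Then for all reals ρ, ρ': |p(ρ) - p(ρ')| ≤ (σ/(1-a)) * sqrt(2c/(eγ)) * |ρ - ρ'|. -/
lemma key_deriv_bound (σ c γ : ℝ) (hσ : 1 ≤ σ) (hc : 0 < c) (hγ : 0 < γ) (t : ℝ) :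
    σ * (Real.exp (-c * t ^ 2 / γ) * (2 * c / γ * |t|)) ≤
      σ * Real.sqrt (2 * c / (Real.exp 1 * γ)) := by
  have hσ0 : 0 ≤ σ := le_trans zero_le_one hσ
  refine mul_le_mul_of_nonneg_left ?_ hσ0
  have hE : 0 < Real.exp 1 := Real.exp_pos 1
  have hx0 : 0 ≤ Real.exp (-c * t ^ 2 / γ) * (2 * c / γ * |t|) := by positivity
  rw [Real.le_sqrt hx0 (by positivity)]
  have hy : (2 * c * t ^ 2 / γ) * Real.exp (-(2 * c * t ^ 2 / γ)) ≤ Real.exp (-1) := by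
    set y := 2 * c * t ^ 2 / γ with hy
    have h1 : y ≤ Real.exp (y - 1) := by
      have := Real.add_one_le_exp (y - 1)
      linarith
    have h2 : y * Real.exp (-y) ≤ Real.exp (y - 1) * Real.exp (-y) := by
      have : 0 < Real.exp (-y) := Real.exp_pos _
      nlinarith
    calc y * Real.exp (-y) ≤ Real.exp (y - 1) * Real.exp (-y) := h2
      _ = Real.exp (-1) := by rw [← Real.exp_add]; ring_nf
  have hexp : Real.exp (-c * t ^ 2 / γ) ^ 2 = Real.exp (-(2 * c * t ^ 2 / γ)) := by
    rw [← Real.exp_nat_mul]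
    congr 1
    push_cast
    ring
  have habs : |t| ^ 2 = t ^ 2 := sq_abs t
  have hineq : (Real.exp (-c * t ^ 2 / γ) * (2 * c / γ * |t|)) ^ 2
      = (2 * c / γ) * ((2 * c * t ^ 2 / γ) * Real.exp (-(2 * c * t ^ 2 / γ))) := by
    rw [mul_pow, mul_pow, hexp, habs]
    ring
  rw [hineq]
  have h2cγ : 0 ≤ 2 * c / γ := by positivity
  calc (2 * c / γ) * ((2 * c * t ^ 2 / γ) * Real.exp (-(2 * c * t ^ 2 / γ)))
      ≤ (2 * c / γ) * Real.exp (-1) := by exact mul_le_mul_of_nonneg_left hy h2cγ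
    _ = 2 * c / (Real.exp 1 * γ) := by
        rw [Real.exp_neg]
        field_simp

lemma gauss_lip (σ c γ : ℝ) (hσ : 1 ≤ σ) (hc : 0 < c) (hγ : 0 < γ) (ρ ρ' : ℝ) :
    |σ * Real.exp (-c * ρ ^ 2 / γ) - σ * Real.exp (-c * ρ' ^ 2 / γ)| ≤
      σ * Real.sqrt (2 * c / (Real.exp 1 * γ)) * |ρ - ρ'| := by
  have hderiv : ∀ t : ℝ, HasDerivAt (fun x => σ * Real.exp (-c * x ^ 2 / γ))
      (σ * (Real.exp (-c * t ^ 2 / γ) * (-c * (2 * t) / γ))) t := by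
    intro t
    have h1 : HasDerivAt (fun x : ℝ => -c * x ^ 2 / γ) (-c * (2 * t) / γ) t := by
      have : HasDerivAt (fun x : ℝ => x ^ 2) (2 * t) t := by
        simpa using (hasDerivAt_pow 2 t)
      simpa [mul_div_assoc] using (this.const_mul (-c)).div_const γ
    exact (h1.exp).const_mul σ
  have := (convex_univ (𝕜 := ℝ) (E := ℝ)).norm_image_sub_le_of_norm_hasDerivWithin_le
    (f := fun x => σ * Real.exp (-c * x ^ 2 / γ))
    (f' := fun t => σ * (Real.exp (-c * t ^ 2 / γ) * (-c * (2 * t) / γ)))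
    (C := σ * Real.sqrt (2 * c / (Real.exp 1 * γ)))
    (fun t _ => (hderiv t).hasDerivWithinAt)
    (fun t _ => by
      rw [Real.norm_eq_abs, abs_mul, abs_mul]
      have h1 : |σ| = σ := abs_of_nonneg (le_trans zero_le_one hσ)
      have h2 : |Real.exp (-c * t ^ 2 / γ)| = Real.exp (-c * t ^ 2 / γ) :=
        abs_of_nonneg (Real.exp_pos _).le
      have h3 : |(-c * (2 * t) / γ)| = 2 * c / γ * |t| := by
        rw [abs_div, abs_mul, abs_of_nonneg hγ.le]
        rw [abs_neg, abs_of_nonneg hc.le, abs_mul]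
        simp [abs_of_nonneg, mul_comm, mul_assoc, mul_left_comm]
        ring
      rw [h1, h2, h3]
      exact key_deriv_bound σ c γ hσ hc hγ t)
    (Set.mem_univ ρ') (Set.mem_univ ρ)
  simpa [Real.norm_eq_abs] using this

/-- Lipschitz bound for the stochastic triggering probability
`p(ρ) = (1 - max{a, σ e^{-cρ²/γ}})/(1-a)` with `ξ ~ Uniform(a,1)`, `0 < a < 1`,
`σ ≥ 1`, `c > 0`, `γ > 0`:
`|p(ρ) - p(ρ')| ≤ (σ/(1-a)) √(2c/(e γ)) |ρ - ρ'|`. -/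
theorem trigger_probability_lipschitz (a σ c γ : ℝ) (ha : 0 < a) (ha1 : a < 1)
    (hσ : 1 ≤ σ) (hc : 0 < c) (hγ : 0 < γ) (ρ ρ' : ℝ) :
    |(1 - max a (σ * Real.exp (-c * ρ ^ 2 / γ))) / (1 - a) -
        (1 - max a (σ * Real.exp (-c * ρ' ^ 2 / γ))) / (1 - a)| ≤
      (σ / (1 - a)) * Real.sqrt (2 * c / (Real.exp 1 * γ)) * |ρ - ρ'| := by
  have h1a : 0 < 1 - a := by linarith
  have hmax : |max a (σ * Real.exp (-c * ρ ^ 2 / γ)) - max a (σ * Real.exp (-c * ρ' ^ 2 / γ))|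
      ≤ |σ * Real.exp (-c * ρ ^ 2 / γ) - σ * Real.exp (-c * ρ' ^ 2 / γ)| := by
    rw [max_comm a, max_comm a]
    exact abs_max_sub_max_le_abs _ _ _
  have hg := gauss_lip σ c γ hσ hc hγ ρ ρ'
  rw [div_sub_div_same, abs_div, abs_of_pos h1a]
  have hnum : |1 - max a (σ * Real.exp (-c * ρ ^ 2 / γ)) -
      (1 - max a (σ * Real.exp (-c * ρ' ^ 2 / γ)))| ≤
      σ * Real.sqrt (2 * c / (Real.exp 1 * γ)) * |ρ - ρ'| := by
    have : (1 - max a (σ * Real.exp (-c * ρ ^ 2 / γ)) -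
        (1 - max a (σ * Real.exp (-c * ρ' ^ 2 / γ)))) =
        -(max a (σ * Real.exp (-c * ρ ^ 2 / γ)) - max a (σ * Real.exp (-c * ρ' ^ 2 / γ))) := by
      ring
    rw [this, abs_neg]
    exact le_trans hmax hg
  calc |1 - max a (σ * Real.exp (-c * ρ ^ 2 / γ)) -
      (1 - max a (σ * Real.exp (-c * ρ' ^ 2 / γ)))| / (1 - a)
      ≤ (σ * Real.sqrt (2 * c / (Real.exp 1 * γ)) * |ρ - ρ'|) / (1 - a) :=
        by gcongr
    _ = (σ / (1 - a)) * Real.sqrt (2 * c / (Real.exp 1 * γ)) * |ρ - ρ'| := by ring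
end

section
/- Robbins–Siegmund-type deterministic consequence used in the convergence proof: let z^k ∈ ℝ^2 be nonnegative vectors satisfying z^{k+1} ≤ (A^k + a^k 11ᵀ) z^k + b^k 1 componentwise, where A^k = [[1, γ^k l^2],[0, 1 - γ^k|ρ_2|]] with γ^k ∈ (0, 1/|ρ_2|), ∑ γ^k = ∞, and a^k, b^k ≥ 0 summable. Then the second component z_2^k → 0 and the first component z_1^k converges. -/
lemma quasi_decreasing_tendsto (u e : ℕ → ℝ) (hu : ∀ k, 0 ≤ u k)
    (he : ∀ k, 0 ≤ e k) (hse : Summable e)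
    (hrec : ∀ k, u (k + 1) ≤ u k + e k) :
    ∃ L, Filter.Tendsto u Filter.atTop (nhds L) := by
  set S : ℕ → ℝ := fun n => ∑ k ∈ Finset.range n, e k with hS
  have hSle : ∀ n, S n ≤ ∑' k, e k := fun n =>
    Summable.sum_le_tsum (Finset.range n) (fun i _ => he i) hse
  set g : ℕ → ℝ := fun n => u n - S n with hg
  have hganti : Antitone g := by
    apply antitone_nat_of_succ_le
    intro n
    have := hrec n
    simp only [hg, hS, Finset.sum_range_succ]
    linarith
  have hbdd : BddBelow (Set.range g) := by
    refine ⟨-∑' k, e k, ?_⟩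
    rintro x ⟨n, rfl⟩
    have := hSle n
    have := hu n
    simp only [hg]
    linarith
  have hgt := tendsto_atTop_ciInf hganti hbdd
  have hSt : Filter.Tendsto S Filter.atTop (nhds (∑' k, e k)) :=
    hse.hasSum.tendsto_sum_nat
  refine ⟨(⨅ n, g n) + ∑' k, e k, ?_⟩
  have : u = fun n => g n + S n := by funext n; simp [hg]
  rw [this]
  exact hgt.add hSt

lemma bounded_of_rec (u a c : ℕ → ℝ) (hu : ∀ k, 0 ≤ u k) (ha : ∀ k, 0 ≤ a k)
    (hc : ∀ k, 0 ≤ c k) (hsa : Summable a) (hsc : Summable c)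
    (hrec : ∀ k, u (k + 1) ≤ (1 + a k) * u k + c k) :
    ∃ M, ∀ k, u k ≤ M := by
  refine ⟨Real.exp (∑' k, a k) * (u 0 + ∑' k, c k), fun k => ?_⟩
  have key : ∀ k, u k ≤ (∏ j ∈ Finset.range k, (1 + a j)) *
      (u 0 + ∑ j ∈ Finset.range k, c j) := by
    intro k
    induction k with
    | zero => simp
    | succ n ih =>
      have hP1 : (1:ℝ) ≤ ∏ j ∈ Finset.range (n+1), (1 + a j) := by
        have := Finset.prod_le_prod (f := fun _ : ℕ => (1:ℝ))
          (g := fun j => 1 + a j) (s := Finset.range (n+1))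
          (fun j _ => zero_le_one) (fun j _ => by linarith [ha j])
        simpa using this
      have hPn : (0:ℝ) ≤ ∏ j ∈ Finset.range n, (1 + a j) :=
        Finset.prod_nonneg (fun j _ => by linarith [ha j])
      calc u (n+1) ≤ (1 + a n) * u n + c n := hrec n
        _ ≤ (1 + a n) * ((∏ j ∈ Finset.range n, (1 + a j)) *
              (u 0 + ∑ j ∈ Finset.range n, c j)) + c n := by
            have := mul_le_mul_of_nonneg_left ih (by linarith [ha n] : (0:ℝ) ≤ 1 + a n)
            linarith
        _ ≤ (∏ j ∈ Finset.range (n+1), (1 + a j)) *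
              (u 0 + ∑ j ∈ Finset.range n, c j) + c n *
              (∏ j ∈ Finset.range (n+1), (1 + a j)) := by
            rw [Finset.prod_range_succ]
            have h := mul_le_mul_of_nonneg_left hP1 (hc n)
            rw [Finset.prod_range_succ] at h
            linarith
        _ = (∏ j ∈ Finset.range (n+1), (1 + a j)) *
              (u 0 + ∑ j ∈ Finset.range (n+1), c j) := by
            rw [Finset.sum_range_succ]; ring
  have hPexp : ∀ k, (∏ j ∈ Finset.range k, (1 + a j)) ≤ Real.exp (∑' k, a k) := by
    intro k
    calc (∏ j ∈ Finset.range k, (1 + a j))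
        ≤ ∏ j ∈ Finset.range k, Real.exp (a j) :=
          Finset.prod_le_prod (fun j _ => by linarith [ha j])
            (fun j _ => by linarith [Real.add_one_le_exp (a j)])
      _ = Real.exp (∑ j ∈ Finset.range k, a j) := by
          rw [Real.exp_sum]
      _ ≤ Real.exp (∑' k, a k) :=
          Real.exp_le_exp.mpr (Summable.sum_le_tsum _ (fun i _ => ha i) hsa)
  have hSc : (u 0 + ∑ j ∈ Finset.range k, c j) ≤ u 0 + ∑' k, c k := by
    have := Summable.sum_le_tsum (Finset.range k) (fun i _ => hc i) hsc
    linarith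
  have h0 : (0:ℝ) ≤ u 0 + ∑ j ∈ Finset.range k, c j := by
    have : (0:ℝ) ≤ ∑ j ∈ Finset.range k, c j :=
      Finset.sum_nonneg (fun i _ => hc i)
    linarith [hu 0]
  calc u k ≤ _ := key k
    _ ≤ Real.exp (∑' k, a k) * (u 0 + ∑ j ∈ Finset.range k, c j) :=
        mul_le_mul_of_nonneg_right (hPexp k) h0
    _ ≤ Real.exp (∑' k, a k) * (u 0 + ∑' k, c k) :=
        mul_le_mul_of_nonneg_left hSc (Real.exp_pos _).le


/-- Robbins–Siegmund-type deterministic consequence: for nonnegative `z₁, z₂`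
satisfying the coupled recursion
`z₁ (k+1) ≤ (1 + a k) z₁ k + (γ k l² + a k) z₂ k + b k` and
`z₂ (k+1) ≤ a k z₁ k + (1 - γ k |ρ₂| + a k) z₂ k + b k`,
with `a, b ≥ 0` summable, `γ k ∈ (0, 1/|ρ₂|)`, `∑ γ k = ∞`, and `z₁` bounded,
the second component tends to `0` and the first component converges. -/
theorem coupled_recursion_convergence (l ρ₂ : ℝ) (hl : 0 < l) (hρ : 0 < ρ₂)
    (a b γ z₁ z₂ : ℕ → ℝ)
    (ha : ∀ k, 0 ≤ a k) (hb : ∀ k, 0 ≤ b k)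
    (hsa : Summable a) (hsb : Summable b)
    (hγpos : ∀ k, 0 < γ k) (hγlt : ∀ k, γ k < 1 / ρ₂)
    (hγdiv : Filter.Tendsto (fun n => ∑ k ∈ Finset.range n, γ k)
      Filter.atTop Filter.atTop)
    (hz₁ : ∀ k, 0 ≤ z₁ k) (hz₂ : ∀ k, 0 ≤ z₂ k)
    (hz₁bdd : ∃ B, ∀ k, z₁ k ≤ B)
    (hrec₁ : ∀ k, z₁ (k + 1) ≤ (1 + a k) * z₁ k + (γ k * l ^ 2 + a k) * z₂ k + b k)
    (hrec₂ : ∀ k, z₂ (k + 1) ≤ a k * z₁ k + (1 - γ k * ρ₂ + a k) * z₂ k + b k) :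
    Filter.Tendsto z₂ Filter.atTop (nhds 0) ∧
      ∃ zlim, Filter.Tendsto z₁ Filter.atTop (nhds zlim) := by
  obtain ⟨B, hB⟩ := hz₁bdd
  have hB0 : 0 ≤ B := le_trans (hz₁ 0) (hB 0)
  -- z₂ is bounded
  have hsc : Summable (fun k => a k * B + b k) := (hsa.mul_right B).add hsb
  obtain ⟨M, hM⟩ := bounded_of_rec z₂ a (fun k => a k * B + b k) hz₂ ha
    (fun k => add_nonneg (mul_nonneg (ha k) hB0) (hb k)) hsa hsc
    (by
      intro k
      show z₂ (k + 1) ≤ (1 + a k) * z₂ k + (a k * B + b k)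
      have h2 := hrec₂ k
      have h3 : a k * z₁ k ≤ a k * B := mul_le_mul_of_nonneg_left (hB k) (ha k)
      have h4 : (0:ℝ) ≤ γ k * ρ₂ * z₂ k :=
        mul_nonneg (mul_nonneg (hγpos k).le hρ.le) (hz₂ k)
      nlinarith [hz₂ k, ha k])
  have hM0 : 0 ≤ M := le_trans (hz₂ 0) (hM 0)
  -- summable error terms
  set e : ℕ → ℝ := fun k => a k * (B + M) + b k with he_def
  have he : ∀ k, 0 ≤ e k := fun k =>
    add_nonneg (mul_nonneg (ha k) (by linarith)) (hb k)
  have hse : Summable e := (hsa.mul_right (B + M)).add hsb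
  have hkey : ∀ k, z₂ (k + 1) ≤ z₂ k - γ k * ρ₂ * z₂ k + e k := by
    intro k
    have h2 := hrec₂ k
    have h3 : a k * z₁ k ≤ a k * B := mul_le_mul_of_nonneg_left (hB k) (ha k)
    have h4 : a k * z₂ k ≤ a k * M := mul_le_mul_of_nonneg_left (hM k) (ha k)
    simp only [he_def]
    nlinarith
  -- Summable (γ * z₂)
  have hsγz : Summable (fun k => γ k * z₂ k) := by
    have hsum : Summable (fun k => ρ₂ * (γ k * z₂ k)) := by
      apply summable_of_sum_range_le
        (c := z₂ 0 + ∑' k, e k)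
        (fun k => mul_nonneg hρ.le (mul_nonneg (hγpos k).le (hz₂ k)))
      intro n
      have tele : ∑ k ∈ Finset.range n, (z₂ k - z₂ (k + 1)) = z₂ 0 - z₂ n :=
        Finset.sum_range_sub' z₂ n
      have hbound : ∑ k ∈ Finset.range n, ρ₂ * (γ k * z₂ k)
          ≤ ∑ k ∈ Finset.range n, ((z₂ k - z₂ (k + 1)) + e k) := by
        apply Finset.sum_le_sum
        intro k _
        have := hkey k
        nlinarith [hz₂ k]
      have hesum : ∑ k ∈ Finset.range n, e k ≤ ∑' k, e k :=
        Summable.sum_le_tsum _ (fun i _ => he i) hse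
      rw [Finset.sum_add_distrib, tele] at hbound
      linarith [hz₂ n]
    have := (summable_mul_left_iff hρ.ne').mp hsum
    exact this
  -- z₂ converges
  obtain ⟨L₂, hL₂⟩ := quasi_decreasing_tendsto z₂ e hz₂ he hse
    (fun k => by
      have := hkey k
      have h4 : (0:ℝ) ≤ γ k * ρ₂ * z₂ k :=
        mul_nonneg (mul_nonneg (hγpos k).le hρ.le) (hz₂ k)
      linarith)
  have hL₂0 : 0 ≤ L₂ := le_of_tendsto_of_tendsto' tendsto_const_nhds hL₂ hz₂
  -- L₂ = 0
  have hL₂eq : L₂ = 0 := by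
    by_contra hne
    have hpos : 0 < L₂ := lt_of_le_of_ne hL₂0 (Ne.symm hne)
    have hev : ∀ᶠ k in Filter.atTop, L₂ / 2 < z₂ k :=
      hL₂.eventually (eventually_gt_nhds (by linarith))
    obtain ⟨N, hN⟩ := hev.exists_forall_of_atTop
    have hsγ : Summable γ := by
      rw [← summable_nat_add_iff N]
      have hcomp : Summable (fun k => γ (k + N) * z₂ (k + N)) :=
        (summable_nat_add_iff N).mpr hsγz
      refine Summable.of_nonneg_of_le (fun k => (hγpos _).le) (fun k => ?_)
        (hcomp.mul_left (2 / L₂))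
      have h1 : L₂ / 2 ≤ z₂ (k + N) := (hN (k + N) (Nat.le_add_left N k)).le
      rw [← sub_nonneg]
      have heq : (2 / L₂) * (γ (k + N) * z₂ (k + N)) - γ (k + N)
          = (2 / L₂) * γ (k + N) * (z₂ (k + N) - L₂ / 2) := by
        field_simp
      rw [heq]
      exact mul_nonneg (mul_nonneg (by positivity) (hγpos _).le) (by linarith)
    exact not_tendsto_atTop_of_tendsto_nhds hsγ.hasSum.tendsto_sum_nat hγdiv
  rw [hL₂eq] at hL₂
  refine ⟨hL₂, ?_⟩
  -- Lyapunov function w = z₁ + (l²/ρ₂) z₂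
  set r : ℝ := l ^ 2 / ρ₂ with hr_def
  have hr0 : 0 ≤ r := div_nonneg (sq_nonneg l) hρ.le
  have hrρ : r * ρ₂ = l ^ 2 := div_mul_cancel₀ _ hρ.ne'
  set w : ℕ → ℝ := fun k => z₁ k + r * z₂ k with hw_def
  have hw0 : ∀ k, 0 ≤ w k := fun k =>
    add_nonneg (hz₁ k) (mul_nonneg hr0 (hz₂ k))
  set c : ℕ → ℝ := fun k => (1 + r) * e k with hc_def
  have hc : ∀ k, 0 ≤ c k := fun k => mul_nonneg (by linarith) (he k)
  have hsc' : Summable c := hse.mul_left _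
  have hwrec : ∀ k, w (k + 1) ≤ w k + c k := by
    intro k
    have h1 := hrec₁ k
    have h2 := mul_le_mul_of_nonneg_left (hrec₂ k) hr0
    have h3 : a k * z₁ k ≤ a k * B := mul_le_mul_of_nonneg_left (hB k) (ha k)
    have h4 : a k * z₂ k ≤ a k * M := mul_le_mul_of_nonneg_left (hM k) (ha k)
    have h5 : r * (a k * z₁ k) ≤ r * (a k * B) :=
      mul_le_mul_of_nonneg_left h3 hr0
    have h6 : r * (a k * z₂ k) ≤ r * (a k * M) :=
      mul_le_mul_of_nonneg_left h4 hr0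
    have hcancel : r * (γ k * ρ₂ * z₂ k) = γ k * l ^ 2 * z₂ k := by
      rw [← hrρ]; ring
    simp only [hw_def, hc_def, he_def]
    nlinarith [h1, h2, h3, h4, h5, h6]
  obtain ⟨Lw, hLw⟩ := quasi_decreasing_tendsto w c hw0 hc hsc' hwrec
  refine ⟨Lw, ?_⟩
  have : z₁ = fun k => w k - r * z₂ k := by
    funext k; simp [hw_def]
  rw [this]
  have := hLw.sub ((hL₂.const_mul r))
  simpa using this
end
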